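/- There exists a (necessarily unique) k-algebra homomorphism π : H → L with π(g₁) = 1, π(g₂) = 1, π(x₁) = 0, π(y₁) = Ē, and π(x₂) = w̄₀, where Ē, w̄₀ denote the images of E, w₀ in L. The map π is surjective, it satisfies π(z_n) = w̄_n for all 0 ≤ n ≤ G, and its kernel equals the two-sided ideal of H generated by x₁, g₁ − 1, and g₂ − 1. -/

import Mathlib

noncomputable section

namespace LstrSplit

variable (k : Type*) [Field k]

/-! ### The algebra `H = B(𝔏_1(1, G)) # k[(ℤ/f)²]` (the split case `q = 1`) -/

/-- Generators: `x₁ = ι 0`, `y₁ = ι 1`, `x₂ = ι 2`, `g₁ = ι 3`, `g₂ = ι 4`. -/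
def X1 : FreeAlgebra k (Fin 5) := FreeAlgebra.ι k (0 : Fin 5)
def Y1 : FreeAlgebra k (Fin 5) := FreeAlgebra.ι k (1 : Fin 5)
def X2 : FreeAlgebra k (Fin 5) := FreeAlgebra.ι k (2 : Fin 5)
def G1 : FreeAlgebra k (Fin 5) := FreeAlgebra.ι k (3 : Fin 5)
def G2 : FreeAlgebra k (Fin 5) := FreeAlgebra.ι k (4 : Fin 5)

/-- `z_0 = x₂`, `z_{n+1} = y₁ z_n − z_n y₁`. -/
def z : ℕ → FreeAlgebra k (Fin 5)
  | 0 => X2 k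
  | n + 1 => Y1 k * z n - z n * Y1 k

/-- The defining relations of `H`. -/
def gens (a : k) (p G f : ℕ) : Set (FreeAlgebra k (Fin 5)) :=
  ({Y1 k * X1 k - X1 k * Y1 k + (2⁻¹ : k) • (X1 k) ^ 2,
    (X1 k) ^ p, (Y1 k) ^ p,
    X1 k * X2 k - X2 k * X1 k,
    z k (G + 1),
    (G1 k) ^ f - 1, (G2 k) ^ f - 1,
    G1 k * G2 k - G2 k * G1 k,
    G1 k * X1 k - X1 k * G1 k,
    G1 k * Y1 k - Y1 k * G1 k - X1 k * G1 k,
    G1 k * X2 k - X2 k * G1 k,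
    G2 k * X1 k - X1 k * G2 k,
    G2 k * Y1 k - Y1 k * G2 k - a • (X1 k * G2 k),
    G2 k * X2 k - X2 k * G2 k} : Set (FreeAlgebra k (Fin 5)))
  ∪ {e | ∃ t < G, e = z k t * z k (t + 1) - z k (t + 1) * z k t}
  ∪ {e | ∃ t ≤ G, e = (z k t) ^ p}

def rel (a : k) (p G f : ℕ) :
    FreeAlgebra k (Fin 5) → FreeAlgebra k (Fin 5) → Prop :=
  fun u v => u ∈ gens k a p G f ∧ v = 0

def H (a : k) (p G f : ℕ) := RingQuot (rel k a p G f)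

instance (a : k) (p G f : ℕ) : Ring (H k a p G f) :=
  inferInstanceAs (Ring (RingQuot (rel k a p G f)))

instance (a : k) (p G f : ℕ) : Algebra k (H k a p G f) :=
  inferInstanceAs (Algebra k (RingQuot (rel k a p G f)))

def x1H (a : k) (p G f : ℕ) : H k a p G f :=
  RingQuot.mkAlgHom k (rel k a p G f) (X1 k)
def y1H (a : k) (p G f : ℕ) : H k a p G f :=
  RingQuot.mkAlgHom k (rel k a p G f) (Y1 k)
def x2H (a : k) (p G f : ℕ) : H k a p G f :=
  RingQuot.mkAlgHom k (rel k a p G f) (X2 k)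
def g1H (a : k) (p G f : ℕ) : H k a p G f :=
  RingQuot.mkAlgHom k (rel k a p G f) (G1 k)
def g2H (a : k) (p G f : ℕ) : H k a p G f :=
  RingQuot.mkAlgHom k (rel k a p G f) (G2 k)
def zH (a : k) (p G f : ℕ) (t : ℕ) : H k a p G f :=
  RingQuot.mkAlgHom k (rel k a p G f) (z k t)

/-! ### The restricted enveloping algebra `L = u(V(G) ⋊ kE)` -/

/-- Generators: `E = ι 0`, `w₀ = ι 1`. -/
def E : FreeAlgebra k (Fin 2) := FreeAlgebra.ι k (0 : Fin 2)
def W0 : FreeAlgebra k (Fin 2) := FreeAlgebra.ι k (1 : Fin 2)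

/-- `w_{n+1} = E w_n − w_n E`. -/
def w : ℕ → FreeAlgebra k (Fin 2)
  | 0 => W0 k
  | n + 1 => E k * w n - w n * E k

def gensL (p G : ℕ) : Set (FreeAlgebra k (Fin 2)) :=
  {e | ∃ m ≤ G, ∃ n ≤ G, e = w k m * w k n - w k n * w k m}
  ∪ {E k * w k G - w k G * E k, (E k) ^ p}
  ∪ {e | ∃ n ≤ G, e = (w k n) ^ p}

def relL (p G : ℕ) :
    FreeAlgebra k (Fin 2) → FreeAlgebra k (Fin 2) → Prop :=
  fun u v => u ∈ gensL k p G ∧ v = 0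

def L (p G : ℕ) := RingQuot (relL k p G)

instance (p G : ℕ) : Ring (L k p G) :=
  inferInstanceAs (Ring (RingQuot (relL k p G)))

instance (p G : ℕ) : Algebra k (L k p G) :=
  inferInstanceAs (Algebra k (RingQuot (relL k p G)))

def EL (p G : ℕ) : L k p G := RingQuot.mkAlgHom k (relL k p G) (E k)
def wL (p G : ℕ) (n : ℕ) : L k p G := RingQuot.mkAlgHom k (relL k p G) (w k n)

end LstrSplit

open LstrSplit

/-!
`π` is the map induced on `H` by `x₁ ↦ 0, y₁ ↦ E, x₂ ↦ w₀, gᵢ ↦ 1`: it kills the relations of `H`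
because `z_{G+1} ↦ [E, w_G] = 0` and the `z`'s map to the `w`'s. In the other direction
`E ↦ y₁, w₀ ↦ x₂` kills the relations of `L`, the commutation of all `z_m, z_n` following from that
of consecutive ones by the Jacobi identity; this gives a section `ψ` of `π`, so `π` is onto.
Modulo `I = (x₁, g₁ - 1, g₂ - 1)` every generator `h` of `H` agrees with `ψ (π h)`, hence so does
every element, which makes `ker π = I`.
-/

section Generalities

variable {R A : Type*} [CommRing R] [Ring A] [Algebra R A]

theorem commute_of_commute_succ (y : A) (z : ℕ → A) (hz : ∀ n, z (n + 1) = y * z n - z n * y)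
    (hsucc : ∀ n, Commute (z n) (z (n + 1))) (m n : ℕ) : Commute (z m) (z n) := by
  have jacobi (c w : A) : c * (y * w - w * y) - (y * w - w * y) * c =
      -((y * c - c * y) * w - w * (y * c - c * y)) +
        (y * (c * w - w * c) - (c * w - w * c) * y) := by
    noncomm_ring
  have gap : ∀ d m, Commute (z m) (z (m + d)) ∧ Commute (z m) (z (m + d + 1)) := by
    intro d
    induction d with
    | zero => exact fun m => ⟨Commute.refl _, hsucc m⟩
    | succ d ih =>
      refine fun m => ⟨(ih m).2, sub_eq_zero.mp ?_⟩
      have h₁ := (ih (m + 1)).1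
      rw [show m + 1 + d = m + d + 1 by omega] at h₁
      rw [show m + (d + 1) + 1 = m + d + 1 + 1 by omega, hz, jacobi, ← hz,
        sub_eq_zero_of_eq h₁, sub_eq_zero_of_eq (ih m).2]
      simp
  rcases le_total m n with h | h
  · obtain ⟨d, rfl⟩ := Nat.exists_eq_add_of_le h
    exact (gap d m).1
  · obtain ⟨d, rfl⟩ := Nat.exists_eq_add_of_le h
    exact (gap d n).1.symm

theorem TwoSidedIdeal.ker_eq_of_sub_mem {B : Type*} [Ring B] [Algebra R B] {s : Set A}
    (hs : Algebra.adjoin R s = ⊤) {π : A →ₐ[R] B} (ψ : B →ₐ[R] A) {I : TwoSidedIdeal A}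
    (hI : I ≤ TwoSidedIdeal.ker π) (hsub : ∀ x ∈ s, x - ψ (π x) ∈ I) :
    TwoSidedIdeal.ker π = I := by
  have key (x : A) : x - ψ (π x) ∈ I := by
    induction (hs ▸ Algebra.mem_top : x ∈ Algebra.adjoin R s) using Algebra.adjoin_induction with
    | mem x hx => exact hsub x hx
    | algebraMap r => simp
    | add x y _ _ hx hy =>
      simpa only [map_add, add_sub_add_comm] using I.add_mem hx hy
    | mul x y _ _ hx hy =>
      have h : x * y - ψ (π (x * y)) = (x - ψ (π x)) * y + ψ (π x) * (y - ψ (π y)) := by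
        rw [map_mul, map_mul]; noncomm_ring
      rw [h]
      exact I.add_mem (I.mul_mem_right _ _ hx) (I.mul_mem_left _ _ hy)
  refine le_antisymm (fun x hx => ?_) hI
  simpa [(TwoSidedIdeal.mem_ker π).mp hx] using key x

theorem RingQuot.adjoin_range_mkAlgHom_ι {X : Type*}
    (r : FreeAlgebra R X → FreeAlgebra R X → Prop) :
    Algebra.adjoin R (Set.range fun i => RingQuot.mkAlgHom R r (FreeAlgebra.ι R i)) = ⊤ := by
  rw [Set.range_comp' (RingQuot.mkAlgHom R r), Algebra.adjoin_image, FreeAlgebra.adjoin_range_ι,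
    Algebra.map_top, AlgHom.range_eq_top]
  exact RingQuot.mkAlgHom_surjective R r

end Generalities

namespace LstrSplit

variable {k : Type*} [Field k] {a : k} {p G f : ℕ}

theorem mkAlgHom_eq_zero_of_mem_gens {e : FreeAlgebra k (Fin 5)} (he : e ∈ gens k a p G f) :
    RingQuot.mkAlgHom k (rel k a p G f) e = 0 := by
  simpa using RingQuot.mkAlgHom_rel k (s := rel k a p G f) ⟨he, rfl⟩

theorem zH_succ (n : ℕ) :
    zH k a p G f (n + 1) = y1H k a p G f * zH k a p G f n - zH k a p G f n * y1H k a p G f := by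
  simp only [zH, z, map_sub, map_mul]; rfl

theorem zH_eq_zero {n : ℕ} (hn : G < n) : zH k a p G f n = 0 := by
  induction n, hn using Nat.le_induction with
  | base => exact mkAlgHom_eq_zero_of_mem_gens (Or.inl (Or.inl (by simp)))
  | succ n _ ih => rw [zH_succ, ih, mul_zero, zero_mul, sub_zero]

theorem commute_zH (m n : ℕ) : Commute (zH k a p G f m) (zH k a p G f n) := by
  refine commute_of_commute_succ _ _ zH_succ (fun t => ?_) m n
  rcases lt_or_ge t G with ht | ht
  · have h := mkAlgHom_eq_zero_of_mem_gens (a := a) (p := p) (f := f) (Or.inl (Or.inr ⟨t, ht, rfl⟩))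
    rw [map_sub, map_mul, map_mul] at h
    exact sub_eq_zero.mp h
  · rw [zH_eq_zero (by omega : G < t + 1)]
    exact Commute.zero_right _

theorem y1H_pow : y1H k a p G f ^ p = 0 :=
  (map_pow (RingQuot.mkAlgHom k (rel k a p G f)) _ _).symm.trans
    (mkAlgHom_eq_zero_of_mem_gens (Or.inl (Or.inl (by simp))))

theorem zH_pow {t : ℕ} (ht : t ≤ G) : zH k a p G f t ^ p = 0 :=
  (map_pow (RingQuot.mkAlgHom k (rel k a p G f)) _ _).symm.trans
    (mkAlgHom_eq_zero_of_mem_gens (Or.inr ⟨t, ht, rfl⟩))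

theorem mkAlgHom_eq_zero_of_mem_gensL {e : FreeAlgebra k (Fin 2)} (he : e ∈ gensL k p G) :
    RingQuot.mkAlgHom k (relL k p G) e = 0 := by
  simpa using RingQuot.mkAlgHom_rel k (s := relL k p G) ⟨he, rfl⟩

theorem wL_succ (n : ℕ) :
    wL k p G (n + 1) = EL k p G * wL k p G n - wL k p G n * EL k p G := by
  simp only [wL, w, map_sub, map_mul]; rfl

theorem EL_pow : EL k p G ^ p = 0 :=
  (map_pow (RingQuot.mkAlgHom k (relL k p G)) _ _).symm.trans
    (mkAlgHom_eq_zero_of_mem_gensL (Or.inl (Or.inr (by simp))))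

theorem wL_pow {t : ℕ} (ht : t ≤ G) : wL k p G t ^ p = 0 :=
  (map_pow (RingQuot.mkAlgHom k (relL k p G)) _ _).symm.trans
    (mkAlgHom_eq_zero_of_mem_gensL (Or.inr ⟨t, ht, rfl⟩))

theorem commute_wL {m n : ℕ} (hm : m ≤ G) (hn : n ≤ G) : Commute (wL k p G m) (wL k p G n) := by
  have h := mkAlgHom_eq_zero_of_mem_gensL (k := k) (p := p) (Or.inl (Or.inl ⟨m, hm, n, hn, rfl⟩))
  rw [map_sub, map_mul, map_mul] at h
  exact sub_eq_zero.mp h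

theorem wL_succ_G : wL k p G (G + 1) = 0 :=
  mkAlgHom_eq_zero_of_mem_gensL (Or.inl (Or.inr (Or.inl rfl)))

variable (k p G) in
def freeToL : FreeAlgebra k (Fin 5) →ₐ[k] L k p G :=
  FreeAlgebra.lift k ![0, EL k p G, wL k p G 0, 1, 1]

@[simp] theorem freeToL_X1 : freeToL k p G (X1 k) = 0 := by simp [freeToL, X1]
@[simp] theorem freeToL_Y1 : freeToL k p G (Y1 k) = EL k p G := by simp [freeToL, Y1]
@[simp] theorem freeToL_X2 : freeToL k p G (X2 k) = wL k p G 0 := by simp [freeToL, X2]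
@[simp] theorem freeToL_G1 : freeToL k p G (G1 k) = 1 := by simp [freeToL, G1]
@[simp] theorem freeToL_G2 : freeToL k p G (G2 k) = 1 := by simp [freeToL, G2]

@[simp] theorem freeToL_z (n : ℕ) : freeToL k p G (z k n) = wL k p G n := by
  induction n with
  | zero => exact freeToL_X2
  | succ n ih => simp [z, ih, wL_succ]

theorem freeToL_eq_zero_of_mem_gens (hp : p ≠ 0) {e : FreeAlgebra k (Fin 5)}
    (he : e ∈ gens k a p G f) : freeToL k p G e = 0 := by
  rcases he with (he | ⟨t, ht, rfl⟩) | ⟨t, ht, rfl⟩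
  · simp only [Set.mem_insert_iff, Set.mem_singleton_iff] at he
    rcases he with rfl | rfl | rfl | rfl | rfl | rfl | rfl | rfl | rfl | rfl | rfl | rfl | rfl |
      rfl <;> simp [hp, EL_pow, wL_succ_G]
  · rw [map_sub, map_mul, map_mul, freeToL_z, freeToL_z, (commute_wL ht.le ht).eq, sub_self]
  · rw [map_pow, freeToL_z, wL_pow ht]

variable (k a p G f) in
def freeToH : FreeAlgebra k (Fin 2) →ₐ[k] H k a p G f :=
  FreeAlgebra.lift k ![y1H k a p G f, x2H k a p G f]

@[simp] theorem freeToH_E : freeToH k a p G f (E k) = y1H k a p G f := by simp [freeToH, E]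
@[simp] theorem freeToH_W0 : freeToH k a p G f (W0 k) = x2H k a p G f := by simp [freeToH, W0]

@[simp] theorem freeToH_w (n : ℕ) : freeToH k a p G f (w k n) = zH k a p G f n := by
  induction n with
  | zero => exact freeToH_W0
  | succ n ih => simp [w, ih, zH_succ]

theorem freeToH_eq_zero_of_mem_gensL {e : FreeAlgebra k (Fin 2)} (he : e ∈ gensL k p G) :
    freeToH k a p G f e = 0 := by
  rcases he with (⟨m, hm, n, hn, rfl⟩ | he) | ⟨n, hn, rfl⟩
  · rw [map_sub, map_mul, map_mul, freeToH_w, freeToH_w, (commute_zH m n).eq, sub_self]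
  · simp only [Set.mem_insert_iff, Set.mem_singleton_iff] at he
    rcases he with rfl | rfl
    · rw [← w, freeToH_w, zH_eq_zero (Nat.lt_succ_self G)]
    · simp [y1H_pow]
  · rw [map_pow, freeToH_w, zH_pow hn]

variable (k a p G f) in
def proj (hp : p ≠ 0) : H k a p G f →ₐ[k] L k p G :=
  RingQuot.liftAlgHom k ⟨freeToL k p G, fun _ _ ⟨he, h0⟩ => by
    rw [h0, map_zero, freeToL_eq_zero_of_mem_gens hp he]⟩

variable (k a p G f) in
def splitting : L k p G →ₐ[k] H k a p G f :=
  RingQuot.liftAlgHom k ⟨freeToH k a p G f, fun _ _ ⟨he, h0⟩ => by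
    rw [h0, map_zero, freeToH_eq_zero_of_mem_gensL he]⟩

theorem proj_mkAlgHom (hp : p ≠ 0) (x : FreeAlgebra k (Fin 5)) :
    proj k a p G f hp (RingQuot.mkAlgHom k (rel k a p G f) x) = freeToL k p G x :=
  RingQuot.liftAlgHom_mkAlgHom_apply ..

theorem splitting_mkAlgHom (x : FreeAlgebra k (Fin 2)) :
    splitting k a p G f (RingQuot.mkAlgHom k (relL k p G) x) = freeToH k a p G f x :=
  RingQuot.liftAlgHom_mkAlgHom_apply ..

theorem adjoin_generators_H : Algebra.adjoin k (Set.range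
    ![x1H k a p G f, y1H k a p G f, x2H k a p G f, g1H k a p G f, g2H k a p G f]) = ⊤ := by
  refine Eq.trans ?_ (RingQuot.adjoin_range_mkAlgHom_ι (R := k) (rel k a p G f))
  congr 2
  funext i
  fin_cases i <;> rfl

theorem adjoin_generators_L : Algebra.adjoin k (Set.range ![EL k p G, wL k p G 0]) = ⊤ := by
  refine Eq.trans ?_ (RingQuot.adjoin_range_mkAlgHom_ι (R := k) (relL k p G))
  congr 2
  funext i
  fin_cases i <;> rfl

section Generators

variable (hp : p ≠ 0)
include hp

theorem proj_x1H : proj k a p G f hp (x1H k a p G f) = 0 :=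
  (proj_mkAlgHom hp _).trans freeToL_X1
theorem proj_y1H : proj k a p G f hp (y1H k a p G f) = EL k p G :=
  (proj_mkAlgHom hp _).trans freeToL_Y1
theorem proj_x2H : proj k a p G f hp (x2H k a p G f) = wL k p G 0 :=
  (proj_mkAlgHom hp _).trans freeToL_X2
theorem proj_g1H : proj k a p G f hp (g1H k a p G f) = 1 :=
  (proj_mkAlgHom hp _).trans freeToL_G1
theorem proj_g2H : proj k a p G f hp (g2H k a p G f) = 1 :=
  (proj_mkAlgHom hp _).trans freeToL_G2

end Generators

theorem splitting_EL : splitting k a p G f (EL k p G) = y1H k a p G f :=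
  (splitting_mkAlgHom _).trans freeToH_E
theorem splitting_wL_zero : splitting k a p G f (wL k p G 0) = x2H k a p G f :=
  (splitting_mkAlgHom _).trans freeToH_W0

theorem eq_proj (hp : p ≠ 0) {π : H k a p G f →ₐ[k] L k p G}
    (hπ : π (g1H k a p G f) = 1 ∧ π (g2H k a p G f) = 1 ∧
      π (x1H k a p G f) = 0 ∧ π (y1H k a p G f) = EL k p G ∧
      π (x2H k a p G f) = wL k p G 0) :
    π = proj k a p G f hp := by
  obtain ⟨hg1, hg2, hx1, hy1, hx2⟩ := hπ
  refine AlgHom.ext_of_adjoin_eq_top adjoin_generators_H ?_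
  rintro _ ⟨i, rfl⟩
  fin_cases i
  exacts [hx1.trans (proj_x1H hp).symm, hy1.trans (proj_y1H hp).symm,
    hx2.trans (proj_x2H hp).symm, hg1.trans (proj_g1H hp).symm, hg2.trans (proj_g2H hp).symm]

theorem proj_zH (hp : p ≠ 0) (n : ℕ) : proj k a p G f hp (zH k a p G f n) = wL k p G n :=
  (proj_mkAlgHom hp _).trans (freeToL_z n)

theorem proj_splitting (hp : p ≠ 0) (l : L k p G) :
    proj k a p G f hp (splitting k a p G f l) = l := by
  suffices (proj k a p G f hp).comp (splitting k a p G f) = AlgHom.id k (L k p G) from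
    AlgHom.congr_fun this l
  refine AlgHom.ext_of_adjoin_eq_top adjoin_generators_L ?_
  rintro _ ⟨i, rfl⟩
  fin_cases i
  exacts [(congrArg _ splitting_EL).trans (proj_y1H hp),
    (congrArg _ splitting_wL_zero).trans (proj_x2H hp)]

theorem ker_proj (hp : p ≠ 0) :
    TwoSidedIdeal.ker (proj k a p G f hp) = TwoSidedIdeal.span
      {x1H k a p G f, g1H k a p G f - 1, g2H k a p G f - 1} := by
  refine TwoSidedIdeal.ker_eq_of_sub_mem adjoin_generators_H (splitting k a p G f) ?_ ?_
  · rw [TwoSidedIdeal.span_le]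
    rintro _ (rfl | rfl | rfl) <;> simp [TwoSidedIdeal.mem_ker, proj_x1H, proj_g1H, proj_g2H]
  · rintro _ ⟨i, rfl⟩
    fin_cases i <;> simp only [Fin.zero_eta, Fin.mk_one, Fin.reduceFinMk, Matrix.cons_val]
    · rw [proj_x1H, map_zero, sub_zero]
      exact TwoSidedIdeal.subset_span (by simp)
    · rw [proj_y1H, splitting_EL, sub_self]
      exact zero_mem _
    · rw [proj_x2H, splitting_wL_zero, sub_self]
      exact zero_mem _
    · rw [proj_g1H, map_one]
      exact TwoSidedIdeal.subset_span (by simp)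
    · rw [proj_g2H, map_one]
      exact TwoSidedIdeal.subset_span (by simp)

end LstrSplit

theorem laestrygonian_split_projection_general
    (k : Type*) [Field k] (p : ℕ) (hp : p.Prime) (f : ℕ) (G : ℕ) (a : k) :
    (∃! π : H k a p G f →ₐ[k] L k p G,
      π (g1H k a p G f) = 1 ∧ π (g2H k a p G f) = 1 ∧
      π (x1H k a p G f) = 0 ∧ π (y1H k a p G f) = EL k p G ∧
      π (x2H k a p G f) = wL k p G 0) ∧
    (∀ π : H k a p G f →ₐ[k] L k p G,
      (π (g1H k a p G f) = 1 ∧ π (g2H k a p G f) = 1 ∧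
       π (x1H k a p G f) = 0 ∧ π (y1H k a p G f) = EL k p G ∧
       π (x2H k a p G f) = wL k p G 0) →
      Function.Surjective π ∧
      (∀ n ≤ G, π (zH k a p G f n) = wL k p G n) ∧
      (∀ h : H k a p G f, π h = 0 ↔
        h ∈ TwoSidedIdeal.span
          ({x1H k a p G f, g1H k a p G f - 1, g2H k a p G f - 1} :
            Set (H k a p G f)))) := by
  have hp₀ := hp.ne_zero
  refine ⟨⟨proj k a p G f hp₀,
    ⟨proj_g1H hp₀, proj_g2H hp₀, proj_x1H hp₀, proj_y1H hp₀, proj_x2H hp₀⟩,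
    fun π hπ => eq_proj hp₀ hπ⟩, fun π hπ => ?_⟩
  obtain rfl := eq_proj hp₀ hπ
  refine ⟨fun l => ⟨_, proj_splitting hp₀ l⟩, fun n _ => proj_zH hp₀ n, fun h => ?_⟩
  rw [← TwoSidedIdeal.mem_ker, ker_proj]

/-- Let `k` be a field of odd prime characteristic `p`,
`f` a positive multiple of `p`, `1 ≤ G ≤ p − 1` and `a ∈ k` with
`2a = −G·1_k`.  There is a unique algebra map `π : H → L` with `π(g₁) = 1`,
`π(g₂) = 1`, `π(x₁) = 0`, `π(y₁) = Ē`, `π(x₂) = w̄₀`; it is surjective,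
satisfies `π(z_n) = w̄_n` for `0 ≤ n ≤ G`, and its kernel is the two-sided
ideal of `H` generated by `x₁`, `g₁ − 1` and `g₂ − 1`. -/
theorem laestrygonian_split_projection
    (k : Type*) [Field k] (p : ℕ) (hp : p.Prime) (hodd : Odd p)
    [CharP k p] (f : ℕ) (hf : 0 < f) (hdvd : p ∣ f)
    (G : ℕ) (hG1 : 1 ≤ G) (hG2 : G ≤ p - 1)
    (a : k) (ha : 2 * a = -(G : k)) :
    (∃! π : H k a p G f →ₐ[k] L k p G,
      π (g1H k a p G f) = 1 ∧ π (g2H k a p G f) = 1 ∧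
      π (x1H k a p G f) = 0 ∧ π (y1H k a p G f) = EL k p G ∧
      π (x2H k a p G f) = wL k p G 0) ∧
    (∀ π : H k a p G f →ₐ[k] L k p G,
      (π (g1H k a p G f) = 1 ∧ π (g2H k a p G f) = 1 ∧
       π (x1H k a p G f) = 0 ∧ π (y1H k a p G f) = EL k p G ∧
       π (x2H k a p G f) = wL k p G 0) →
      Function.Surjective π ∧
      (∀ n ≤ G, π (zH k a p G f n) = wL k p G n) ∧
      (∀ h : H k a p G f, π h = 0 ↔
        h ∈ TwoSidedIdeal.span
          ({x1H k a p G f, g1H k a p G f - 1, g2H k a p G f - 1} :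
            Set (H k a p G f)))) :=
  laestrygonian_split_projection_general k p hp f G a
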